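/- Let T : [0,1) → [0,1) be a right-continuous interval exchange transformation with N−1 discontinuities (N > 1), and let Δ = [a,b) ⊆ [0,1). Then the induced first return map T_Δ : Δ → Δ is again a right-continuous interval exchange transformation, and it has at most N+1 discontinuities. -/

import Mathlib

/-- A right-continuous interval exchange transformation of `[c, d)`. -/
def IsIETOn (T : ℝ → ℝ) (c d : ℝ) : Prop :=
  ∃ (N : ℕ) (p : ℕ → ℝ) (σ : ℕ → ℝ),
    1 ≤ N ∧ p 0 = c ∧ p N = d ∧ (∀ i < N, p i < p (i + 1)) ∧
    (∀ i < N, ∀ x ∈ Set.Ico (p i) (p (i + 1)), T x = x + σ i) ∧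
    Set.BijOn T (Set.Ico c d) (Set.Ico c d)

/-- A right-continuous IET of `[0, 1)`. -/
def IsIET (T : ℝ → ℝ) : Prop := IsIETOn T 0 1

/-- The set of discontinuities of `T` viewed as a map of `[c, d)`. -/
def Discont (T : ℝ → ℝ) (c d : ℝ) : Set ℝ :=
  {x | x ∈ Set.Ico c d ∧ ¬ ContinuousWithinAt T (Set.Ico c d) x}

/-- The first return time of `x` to `Δ` under `T`: `min {n ≥ 1 | T^[n] x ∈ Δ}`. -/
noncomputable def retTime (T : ℝ → ℝ) (Δ : Set ℝ) (x : ℝ) : ℕ :=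
  sInf {n : ℕ | 1 ≤ n ∧ T^[n] x ∈ Δ}

/-- The first return (induced) map of `T` on `Δ`. -/
noncomputable def retMap (T : ℝ → ℝ) (Δ : Set ℝ) (x : ℝ) : ℝ :=
  T^[retTime T Δ x] x

/-!
Cut `Δ = [a, b)` at the discontinuities of `T` inside `(a, b)` and at the points of `Δ` whose
orbit meets a discontinuity of `T` outside `Δ`, or one of the endpoints `a`, `b`, no later than
its first return to `Δ`. Since `T` is injective, each of these targets is met by at most one such
point, so there are at most `(N - 1) + 2` cuts. On an interval `J` between consecutive cuts, the
iterates `T^k` stay translations, and as long as `J` has not returned, `T^k J` is an interval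
either inside `Δ` or disjoint from it. These intervals are pairwise disjoint and of equal length in
`[0, 1)`, so `J` returns, all of it at the same time. Thus `T_Δ` is injective and a translation on
each piece; comparing Lebesgue measures shows that it is onto `Δ`.
-/

open Set Filter Topology MeasureTheory Function

section Partition

variable {β : Type*} [LinearOrder β] {p : ℕ → β} {n : ℕ}

lemma exists_mem_Ico_succ {x : β} (hx : x ∈ Ico (p 0) (p n)) :
    ∃ i < n, x ∈ Ico (p i) (p (i + 1)) := by
  classical
  have hn : n ≠ 0 := by rintro rfl; exact (not_le.2 hx.2) hx.1
  have hlast : x < p (n - 1 + 1) := by rw [Nat.sub_add_cancel (by omega)]; exact hx.2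
  have hex : ∃ i, x < p (i + 1) := ⟨n - 1, hlast⟩
  refine ⟨Nat.find hex, by have := Nat.find_min' hex hlast; omega, ?_, Nat.find_spec hex⟩
  cases hi : Nat.find hex with
  | zero => exact hx.1
  | succ j => exact not_lt.1 (Nat.find_min hex (hi ▸ Nat.lt_succ_self j))

lemma Ico_succ_subset_Ico (hp : ∀ i < n, p i < p (i + 1)) {i : ℕ} (hi : i < n) :
    Ico (p i) (p (i + 1)) ⊆ Ico (p 0) (p n) := by
  have hmono := (strictMonoOn_Iic_of_lt_succ (ψ := p) (by simpa using hp)).monotoneOn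
  exact Ico_subset_Ico (hmono (by simp) (by simp; omega) (Nat.zero_le i))
    (hmono (by simp; omega) (by simp) (by omega))

lemma exists_partition_of_finite {a b : β} (hab : a < b) {C : Set β} (hC : C.Finite)
    (hCab : C ⊆ Ico a b) :
    ∃ (n : ℕ) (p : ℕ → β), 1 ≤ n ∧ p 0 = a ∧ p n = b ∧ (∀ i < n, p i < p (i + 1)) ∧
      MapsTo p (Ioo 0 n) C ∧ ∀ i < n, Disjoint C (Ioo (p i) (p (i + 1))) := by
  classical
  set F : Finset β := insert a (insert b hC.toFinset)
  have hF : ∀ y ∈ F, y = a ∨ y = b ∨ y ∈ C := by simp [F]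
  have haF : a ∈ F := by simp [F]
  have hbF : b ∈ F := by simp [F]
  have hFab : ∀ y ∈ F, a ≤ y ∧ y ≤ b := fun y hy => by
    rcases hF y hy with rfl | rfl | hy
    exacts [⟨le_rfl, hab.le⟩, ⟨hab.le, le_rfl⟩, ⟨(hCab hy).1, (hCab hy).2.le⟩]
  have hcard : 1 < F.card := Finset.one_lt_card.2 ⟨a, haF, b, hbF, hab.ne⟩
  set e := F.orderEmbOfFin rfl
  set p : ℕ → β := fun i => if h : i < F.card then e ⟨i, h⟩ else b
  have hpe : ∀ i (h : i < F.card), p i = e ⟨i, h⟩ := fun i h => dif_pos h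
  have hp0 : p 0 = a := by
    rw [hpe 0 (by omega), Finset.orderEmbOfFin_zero rfl (by omega)]
    exact le_antisymm (F.min'_le a haF) (F.le_min' _ a fun y hy => (hFab y hy).1)
  have hpn : p (F.card - 1) = b := by
    rw [hpe _ (by omega), Finset.orderEmbOfFin_last rfl (by omega)]
    exact le_antisymm (F.max'_le _ b fun y hy => (hFab y hy).2) (F.le_max' b hbF)
  have hlt : ∀ i j, i < j → j < F.card → p i < p j := fun i j hij hj => by
    rw [hpe i (by omega), hpe j hj]; exact e.strictMono (Fin.mk_lt_mk.2 hij)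
  refine ⟨F.card - 1, p, by omega, hp0, hpn, fun i hi => hlt i (i + 1) (by omega) (by omega),
    fun i hi => ?_, fun i hi => ?_⟩
  · obtain ⟨hi0, hin⟩ := hi
    have hpF : p i ∈ F := by rw [hpe i (by omega)]; exact F.orderEmbOfFin_mem rfl _
    have ha : a < p i := hp0 ▸ hlt 0 i hi0 (by omega)
    have hb : p i < b := hpn ▸ hlt i _ hin (by omega)
    rcases hF _ hpF with h | h | h
    exacts [absurd h ha.ne', absurd h hb.ne, h]
  · rw [Set.disjoint_left]
    intro y hyC hy
    obtain ⟨j, rfl⟩ : y ∈ range e := by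
      rw [Finset.range_orderEmbOfFin]; simp [F, hyC]
    rw [hpe i (by omega), hpe (i + 1) (by omega), mem_Ioo, e.lt_iff_lt, e.lt_iff_lt] at hy
    exact absurd hy (by simp only [Fin.lt_def]; omega)

end Partition

lemma compl_Ico_mem_nhdsGE {α : Type*} [TopologicalSpace α] [LinearOrder α] [OrderTopology α]
    {l r x : α} (hx : x ∉ Ico l r) : (Ico l r)ᶜ ∈ 𝓝[≥] x := by
  rcases not_and_or.1 hx with h | h
  · filter_upwards [mem_nhdsWithin_of_mem_nhds (Iio_mem_nhds (not_le.1 h))] with y hy hyI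
    exact (not_le.2 hy) hyI.1
  · filter_upwards [self_mem_nhdsWithin] with y hy hyI
    exact h ((mem_Ici.1 hy).trans_lt hyI.2)

section PiecewiseTranslation

variable {f : ℝ → ℝ} {c d : ℝ} {n : ℕ} {p τ : ℕ → ℝ}

lemma discont_subset_image_of_piecewise (hp0 : p 0 = c) (hpn : p n = d)
    (hf : ∀ i < n, ∀ x ∈ Ico (p i) (p (i + 1)), f x = x + τ i) :
    Discont f c d ⊆ p '' Ioo 0 n := by
  rintro x ⟨hx, hdisc⟩
  obtain ⟨i, hi, hxi⟩ := exists_mem_Ico_succ (p := p) (hp0 ▸ hpn ▸ hx)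
  by_contra hxp
  have hleft : ∀ᶠ y in 𝓝[Ico c d] x, p i ≤ y := by
    rcases hxi.1.eq_or_lt with h | h
    · obtain rfl : i = 0 := by
        by_contra hi0
        exact hxp ⟨i, ⟨Nat.pos_of_ne_zero hi0, hi⟩, h⟩
      filter_upwards [self_mem_nhdsWithin] with y hy
      exact hp0 ▸ hy.1
    · exact mem_nhdsWithin_of_mem_nhds (Ici_mem_nhds h)
  have hright : ∀ᶠ y in 𝓝[Ico c d] x, y < p (i + 1) :=
    mem_nhdsWithin_of_mem_nhds (Iio_mem_nhds hxi.2)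
  refine hdisc ((continuous_add_const (τ i)).continuousWithinAt.congr_of_eventuallyEq ?_
    (hf i hi x hxi))
  filter_upwards [hleft, hright] with y h1 h2 using hf i hi y ⟨h1, h2⟩

lemma surjOn_of_injOn_of_piecewise (hp0 : p 0 = c) (hpn : p n = d)
    (hp : ∀ i < n, p i < p (i + 1)) (hf : ∀ i < n, ∀ x ∈ Ico (p i) (p (i + 1)), f x = x + τ i)
    (hmaps : MapsTo f (Ico c d) (Ico c d)) (hinj : InjOn f (Ico c d)) :
    SurjOn f (Ico c d) (Ico c d) := by
  set P : ℕ → Set ℝ := fun i => Ico (p i) (p (i + 1))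
  have hPsub : ∀ i ∈ Finset.range n, P i ⊆ Ico c d := fun i hi =>
    hp0 ▸ hpn ▸ Ico_succ_subset_Ico hp (Finset.mem_range.1 hi)
  have hP : ⋃ i ∈ Finset.range n, P i = Ico c d := by
    refine subset_antisymm (iUnion₂_subset hPsub) fun x hx => ?_
    obtain ⟨i, hi, hxi⟩ := exists_mem_Ico_succ (p := p) (hp0 ▸ hpn ▸ hx)
    exact mem_iUnion₂.2 ⟨i, Finset.mem_range.2 hi, hxi⟩
  have hPdisj : (Finset.range n : Set ℕ).PairwiseDisjoint P := by
    have hmono := (strictMonoOn_Iic_of_lt_succ (ψ := p) (by simpa using hp)).monotoneOn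
    have key : ∀ i j, i < j → j < n → Disjoint (P i) (P j) := fun i j hij hj =>
      Ico_disjoint_Ico_same.mono_right (Ico_subset_Ico_left (hmono (by simp; omega)
        (by simp; omega) (by omega)))
    intro i hi j hj hij
    simp only [Finset.coe_range, mem_Iio] at hi hj
    rcases hij.lt_or_gt with h | h
    exacts [key i j h hj, (key j i h hi).symm]
  have himage : ∀ i ∈ Finset.range n, f '' P i = Ico (p i + τ i) (p (i + 1) + τ i) :=
    fun i hi => (image_congr (hf i (Finset.mem_range.1 hi))).trans (image_add_const_Ico _ _ _)
  have hU : f '' Ico c d = ⋃ i ∈ Finset.range n, f '' P i := by rw [← hP, image_iUnion₂]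
  have hvol : volume (f '' Ico c d) = volume (Ico c d) := by
    have himdisj : (Finset.range n : Set ℕ).PairwiseDisjoint (f '' P ·) :=
      fun i hi j hj hij => by
        rw [Function.onFun, disjoint_iff_inter_eq_empty, ← hinj.image_inter (hPsub i hi)
          (hPsub j hj), (hPdisj hi hj hij).inter_eq, image_empty]
    rw [hU, measure_biUnion_finset himdisj, ← hP, measure_biUnion_finset hPdisj]
    · refine Finset.sum_congr rfl fun i hi => ?_
      simp [himage i hi, P, Real.volume_Ico]
    · exact fun i _ => measurableSet_Ico
    · exact fun i hi => himage i hi ▸ measurableSet_Ico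
  -- the part of `[c, d)` missed by `f` is null, yet contains an interval `[y, u)`
  intro y hy
  by_contra hy'
  have hnull : volume (Ico c d \ f '' Ico c d) = 0 := by
    rw [measure_sdiff hmaps.image_subset, hvol, tsub_self]
    · exact (hU ▸ Finset.measurableSet_biUnion _ fun i hi =>
        himage i hi ▸ measurableSet_Ico).nullMeasurableSet
    · simp [hvol, Real.volume_Ico]
  have hnhds : Ico c d \ f '' Ico c d ∈ 𝓝[≥] y := by
    rw [sdiff_eq, hU, compl_iUnion₂]
    refine inter_mem (mem_of_superset (Ico_mem_nhdsGE hy.2) (Ico_subset_Ico_left hy.1))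
      ((biInter_finset_mem _).2 fun i hi => ?_)
    refine himage i hi ▸ compl_Ico_mem_nhdsGE fun hyi => hy' ?_
    exact image_mono (hPsub i hi) (himage i hi ▸ hyi)
  obtain ⟨u, hu, hyu⟩ := mem_nhdsGE_iff_exists_Ico_subset.1 hnhds
  have := measure_mono (μ := volume) hyu
  rw [hnull, Real.volume_Ico, nonpos_iff_eq_zero, ENNReal.ofReal_eq_zero] at this
  linarith [mem_Ioi.1 hu]

end PiecewiseTranslation

namespace IsIETOn

variable {T : ℝ → ℝ} {c d : ℝ}

lemma bijOn (hT : IsIETOn T c d) : BijOn T (Ico c d) (Ico c d) := by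
  obtain ⟨-, -, -, -, -, -, -, -, h⟩ := hT
  exact h

lemma eq_add_sub_of_disjoint_discont (hT : IsIETOn T c d) {u v : ℝ} (hu : c ≤ u) (hv : v ≤ d)
    (hD : Disjoint (Ioo u v) (Discont T c d)) : ∀ x ∈ Ico u v, T x = x + (T u - u) := by
  obtain ⟨M, q, σ, -, hq0, hqM, -, hpiece, -⟩ := hT
  intro x hx
  have huv : u < v := hx.1.trans_lt hx.2
  have hpieceOf : ∀ y ∈ Ico c d, ∃ i < M, y ∈ Ico (q i) (q (i + 1)) := fun y hy =>
    exists_mem_Ico_succ (hq0 ▸ hqM ▸ hy)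
  have hrange : MapsTo (fun y => T y - y) (Ico u v) (σ '' Iio M) := fun y hy => by
    obtain ⟨i, hi, hyi⟩ := hpieceOf y ⟨hu.trans hy.1, hy.2.trans_le hv⟩
    exact ⟨i, hi, by simp only [hpiece i hi y hyi, add_sub_cancel_left]⟩
  -- `T - id` takes finitely many values and is continuous on `[u, v)`, hence constant there
  have hcont : ContinuousOn (fun y => T y - y) (Ico u v) := by
    intro y hy
    rcases hy.1.eq_or_lt with rfl | huy
    · obtain ⟨i, hi, hui⟩ := hpieceOf u ⟨hu, huv.trans_le hv⟩
      refine (continuousWithinAt_const (b := σ i)).congr_of_eventuallyEq ?_ ?_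
        |>.mono Ico_subset_Ici_self
      · filter_upwards [Ico_mem_nhdsGE hui.2] with z hz
        simp only [hpiece i hi z ⟨hui.1.trans hz.1, hz.2⟩, add_sub_cancel_left]
      · simp only [hpiece i hi u hui, add_sub_cancel_left]
    · have hnhds : Ico c d ∈ 𝓝 y := Ico_mem_nhds (hu.trans_lt huy) (hy.2.trans_le hv)
      have hTy : ContinuousWithinAt T (Ico c d) y := by
        by_contra h
        exact hD.notMem_of_mem_left ⟨huy, hy.2⟩ ⟨mem_of_mem_nhds hnhds, h⟩
      exact ((hTy.continuousAt hnhds).sub continuousAt_id).continuousWithinAt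
  have := isPreconnected_Ico.constant_of_mapsTo ((finite_Iio M).image σ).isDiscrete hcont hrange
    hx (left_mem_Ico.2 huv)
  linarith

end IsIETOn

lemma isIETOn_of_injOn {f : ℝ → ℝ} {c d : ℝ} {n : ℕ} {p τ : ℕ → ℝ} (hn : 1 ≤ n)
    (hp0 : p 0 = c) (hpn : p n = d) (hp : ∀ i < n, p i < p (i + 1))
    (hf : ∀ i < n, ∀ x ∈ Ico (p i) (p (i + 1)), f x = x + τ i)
    (hmaps : MapsTo f (Ico c d) (Ico c d)) (hinj : InjOn f (Ico c d)) : IsIETOn f c d :=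
  ⟨n, p, τ, hn, hp0, hpn, hp, hf, hmaps, hinj,
    surjOn_of_injOn_of_piecewise hp0 hpn hp hf hmaps hinj⟩

section FirstReturn

variable {α : Type*} {T : α → α} {U Δ : Set α}

lemma iterate_sub_eq_of_iterate_eq (hmaps : MapsTo T U U) (hinj : InjOn T U) {x y : α}
    (hx : x ∈ U) (hy : y ∈ U) {i j : ℕ} (hij : i ≤ j) (h : T^[i] x = T^[j] y) :
    T^[j - i] y = x := by
  refine hinj.iterate hmaps i (hmaps.iterate _ hy) hx ?_
  rw [← iterate_add_apply, Nat.add_sub_cancel' hij, h]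

lemma eq_of_iterate_eq_of_forall_notMem (hmaps : MapsTo T U U) (hinj : InjOn T U)
    (hΔ : Δ ⊆ U) {x y : α} (hx : x ∈ Δ) (hy : y ∈ Δ) {i j : ℕ} (hi : 1 ≤ i) (hij : i ≤ j)
    (hav : ∀ l, 1 ≤ l → l < j → T^[l] y ∉ Δ) (h : T^[i] x = T^[j] y) : x = y := by
  have hyx := iterate_sub_eq_of_iterate_eq hmaps hinj (hΔ hx) (hΔ hy) hij h
  rcases Nat.eq_zero_or_pos (j - i) with h0 | hpos
  · rw [h0, iterate_zero_apply] at hyx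
    exact hyx.symm
  · exact absurd (hyx ▸ hx) (hav _ hpos (by omega))

def hitsUpToReturn (T : α → α) (Δ S : Set α) : Set α :=
  {ξ ∈ Δ | ∃ k, 1 ≤ k ∧ T^[k] ξ ∈ S ∧ ∀ j, 1 ≤ j → j < k → T^[j] ξ ∉ Δ}

lemma subsingleton_hitsUpToReturn_singleton (hmaps : MapsTo T U U) (hinj : InjOn T U)
    (hΔ : Δ ⊆ U) (s : α) : (hitsUpToReturn T Δ {s}).Subsingleton := by
  rintro ξ ⟨hξ, k, hk, hks, hkav⟩ ξ' ⟨hξ', k', hk', hk's, hk'av⟩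
  rcases le_total k k' with h | h
  · exact eq_of_iterate_eq_of_forall_notMem hmaps hinj hΔ hξ hξ' hk h hk'av (hks.trans hk's.symm)
  · exact (eq_of_iterate_eq_of_forall_notMem hmaps hinj hΔ hξ' hξ hk' h hkav
      (hk's.trans hks.symm)).symm

lemma encard_hitsUpToReturn_le (hmaps : MapsTo T U U) (hinj : InjOn T U) (hΔ : Δ ⊆ U)
    (S : Set α) : (hitsUpToReturn T Δ S).encard ≤ S.encard := by
  have hhit : ∀ ξ ∈ hitsUpToReturn T Δ S, ∃ s ∈ S, ξ ∈ hitsUpToReturn T Δ {s} := by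
    rintro ξ ⟨hξ, k, hk, hkS, hav⟩
    exact ⟨_, hkS, hξ, k, hk, rfl, hav⟩
  choose! g hgS hg using hhit
  refine encard_le_encard_of_injOn hgS fun ξ hξ ξ' hξ' h => ?_
  exact subsingleton_hitsUpToReturn_singleton hmaps hinj hΔ (g ξ) (hg ξ hξ) (h ▸ hg ξ' hξ')

end FirstReturn

section ReturnTime

variable {T : ℝ → ℝ} {Δ : Set ℝ} {x : ℝ}

lemma one_le_retTime (h : ∃ n, 1 ≤ n ∧ T^[n] x ∈ Δ) : 1 ≤ retTime T Δ x :=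
  (Nat.sInf_mem h).1

lemma retMap_mem (h : ∃ n, 1 ≤ n ∧ T^[n] x ∈ Δ) : retMap T Δ x ∈ Δ :=
  (Nat.sInf_mem h).2

lemma iterate_notMem_of_lt_retTime {j : ℕ} (hj : 1 ≤ j) (hjx : j < retTime T Δ x) :
    T^[j] x ∉ Δ :=
  fun h => Nat.notMem_of_lt_sInf hjx ⟨hj, h⟩

lemma retTime_eq {n : ℕ} (hn : 1 ≤ n) (hx : T^[n] x ∈ Δ)
    (hav : ∀ j, 1 ≤ j → j < n → T^[j] x ∉ Δ) : retTime T Δ x = n :=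
  IsLeast.csInf_eq ⟨⟨hn, hx⟩, fun j hj => not_lt.1 fun hjn => hav j hj.1 hjn hj.2⟩

lemma injOn_retMap {U : Set ℝ} (hmaps : MapsTo T U U) (hinj : InjOn T U) (hΔ : Δ ⊆ U)
    (hret : ∀ x ∈ Δ, ∃ n, 1 ≤ n ∧ T^[n] x ∈ Δ) : InjOn (retMap T Δ) Δ := by
  intro x hx y hy h
  rcases le_total (retTime T Δ x) (retTime T Δ y) with hle | hle
  · exact eq_of_iterate_eq_of_forall_notMem hmaps hinj hΔ hx hy (one_le_retTime (hret x hx)) hle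
      (fun j hj hjy => iterate_notMem_of_lt_retTime hj hjy) h
  · exact (eq_of_iterate_eq_of_forall_notMem hmaps hinj hΔ hy hx (one_le_retTime (hret y hy)) hle
      (fun j hj hjx => iterate_notMem_of_lt_retTime hj hjx) h.symm).symm

end ReturnTime

lemma Ico_subset_or_disjoint_of_notMem_Ioo {α : Type*} [LinearOrder α] {l r a b : α}
    (hlr : l < r) (ha : a ∉ Ioo l r) (hb : b ∉ Ioo l r) :
    Ico l r ⊆ Ico a b ∨ Disjoint (Ico l r) (Ico a b) := by
  rw [Ico_subset_Ico_iff hlr, Ico_disjoint_Ico, min_le_iff, le_max_iff, le_max_iff]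
  simp only [mem_Ioo, not_and, not_lt] at ha hb
  by_cases hla : l < a
  · exact Or.inr (Or.inl (Or.inr (ha hla)))
  by_cases hlb : l < b
  · exact Or.inl ⟨not_lt.1 hla, hb hlb⟩
  · exact Or.inr (Or.inr (Or.inl (not_lt.1 hlb)))

section InducedMap

variable {T : ℝ → ℝ} {a b c c' : ℝ}

def cutSet (T : ℝ → ℝ) (a b : ℝ) : Set ℝ :=
  (Discont T 0 1 ∩ Ioo a b) ∪
    hitsUpToReturn T (Ico a b) ((Discont T 0 1 \ Ico a b) ∪ {a, b})

lemma cutSet_subset : cutSet T a b ⊆ Ico a b :=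
  union_subset (fun _ hx => Ioo_subset_Ico_self hx.2) fun _ hx => hx.1

lemma encard_cutSet_le (hT : IsIET T) (hsub : Ico a b ⊆ Ico 0 1) :
    (cutSet T a b).encard ≤ (Discont T 0 1).encard + 2 := by
  set D := Discont T 0 1
  have hpair : ({a, b} : Set ℝ).encard ≤ 2 :=
    (encard_insert_le _ _).trans (by rw [encard_singleton]; rfl)
  have hdisj : Disjoint (D ∩ Ioo a b) (D \ Ico a b) :=
    disjoint_left.2 fun x hx hx' => hx'.2 (Ioo_subset_Ico_self hx.2)
  calc (cutSet T a b).encard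
      ≤ (D ∩ Ioo a b).encard + ((D \ Ico a b).encard + 2) := by
        refine (encard_union_le _ _).trans (add_le_add le_rfl ?_)
        exact (encard_hitsUpToReturn_le hT.bijOn.mapsTo hT.bijOn.injOn hsub _).trans
          ((encard_union_le _ _).trans (add_le_add le_rfl hpair))
    _ = ((D ∩ Ioo a b) ∪ (D \ Ico a b)).encard + 2 := by rw [encard_union_eq hdisj, add_assoc]
    _ ≤ D.encard + 2 := by
        gcongr
        exact union_subset inter_subset_left sdiff_subset

lemma notMem_Ioo_of_disjoint_cutSet (hcab : Ico c c' ⊆ Ico a b)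
    (hfree : Disjoint (cutSet T a b) (Ioo c c')) {m : ℕ} {t : ℝ} (hm : 1 ≤ m)
    (htr : ∀ x ∈ Ico c c', T^[m] x = x + t)
    (hav : ∀ j, 1 ≤ j → j < m → ∀ x ∈ Ico c c', T^[j] x ∉ Ico a b) {s : ℝ}
    (hs : s ∈ (Discont T 0 1 \ Ico a b) ∪ {a, b}) : s ∉ Ioo (c + t) (c' + t) := by
  intro hst
  have hξ : s - t ∈ Ioo c c' := ⟨by linarith [hst.1], by linarith [hst.2]⟩
  have hξ' : s - t ∈ Ico c c' := Ioo_subset_Ico_self hξ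
  refine hfree.ne_of_mem (Or.inr ⟨hcab hξ', m, hm, ?_, fun j hj hjm => hav j hj hjm _ hξ'⟩) hξ rfl
  rwa [htr _ hξ', sub_add_cancel]

lemma exists_iterate_succ_eq_add (hT : IsIET T) (hsub : Ico a b ⊆ Ico 0 1) (hlt : c < c')
    (hcab : Ico c c' ⊆ Ico a b) (hfree : Disjoint (cutSet T a b) (Ioo c c')) {k : ℕ} {t : ℝ}
    (htr : ∀ x ∈ Ico c c', T^[k] x = x + t)
    (hav : ∀ j, 1 ≤ j → j ≤ k → ∀ x ∈ Ico c c', T^[j] x ∉ Ico a b) :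
    ∃ t', ∀ x ∈ Ico c c', T^[k + 1] x = x + t' := by
  obtain ⟨hac, hcb⟩ := (Ico_subset_Ico_iff hlt).1 hcab
  have himage : T^[k] '' Ico c c' = Ico (c + t) (c' + t) :=
    (image_congr htr).trans (image_add_const_Ico _ _ _)
  have hI : Ico (c + t) (c' + t) ⊆ Ico 0 1 :=
    himage ▸ ((hT.bijOn.mapsTo.iterate k).mono_left (hcab.trans hsub)).image_subset
  obtain ⟨h0, h1⟩ := (Ico_subset_Ico_iff (by linarith)).1 hI
  have hD : Disjoint (Ioo (c + t) (c' + t)) (Discont T 0 1) := by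
    refine disjoint_left.2 fun d hd hdD => ?_
    rcases Nat.eq_zero_or_pos k with rfl | hk
    · obtain rfl : t = 0 := by simpa using htr c (left_mem_Ico.2 hlt)
      rw [add_zero, add_zero] at hd
      exact hfree.ne_of_mem (Or.inl ⟨hdD, hac.trans_lt hd.1, hd.2.trans_le hcb⟩) hd rfl
    · have hdt : d - t ∈ Ico c c' := ⟨by linarith [hd.1], by linarith [hd.2]⟩
      have hdΔ : d ∉ Ico a b := by
        simpa [htr _ hdt] using hav k hk le_rfl _ hdt
      exact notMem_Ioo_of_disjoint_cutSet hcab hfree hk htr (fun j hj hjk => hav j hj hjk.le)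
        (Or.inl ⟨hdD, hdΔ⟩) hd
  have htrans := hT.eq_add_sub_of_disjoint_discont h0 h1 hD
  refine ⟨t + (T (c + t) - (c + t)), fun x hx => ?_⟩
  rw [iterate_succ_apply', htr x hx, htrans _ ⟨by linarith [hx.1], by linarith [hx.2]⟩]
  ring

lemma iterate_mem_or_notMem (hlt : c < c') (hcab : Ico c c' ⊆ Ico a b)
    (hfree : Disjoint (cutSet T a b) (Ioo c c')) {m : ℕ} {t : ℝ} (hm : 1 ≤ m)
    (htr : ∀ x ∈ Ico c c', T^[m] x = x + t)
    (hav : ∀ j, 1 ≤ j → j < m → ∀ x ∈ Ico c c', T^[j] x ∉ Ico a b) :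
    (∀ x ∈ Ico c c', T^[m] x ∈ Ico a b) ∨ ∀ x ∈ Ico c c', T^[m] x ∉ Ico a b := by
  have hx : ∀ x ∈ Ico c c', T^[m] x ∈ Ico (c + t) (c' + t) := fun x hx => by
    rw [htr x hx]; exact ⟨by linarith [hx.1], by linarith [hx.2]⟩
  refine (Ico_subset_or_disjoint_of_notMem_Ioo (by linarith : c + t < c' + t)
    (notMem_Ioo_of_disjoint_cutSet hcab hfree hm htr hav (s := a) (by simp))
    (notMem_Ioo_of_disjoint_cutSet hcab hfree hm htr hav (s := b) (by simp))).imp ?_ ?_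
  · exact fun h x hxc => h (hx x hxc)
  · exact fun h x hxc => h.notMem_of_mem_left (hx x hxc)

lemma exists_iterate_eq_add_and_notMem (hT : IsIET T) (hsub : Ico a b ⊆ Ico 0 1) (hlt : c < c')
    (hcab : Ico c c' ⊆ Ico a b) (hfree : Disjoint (cutSet T a b) (Ioo c c')) {k : ℕ}
    (hk : ∀ j, 1 ≤ j → j ≤ k → T^[j] c ∉ Ico a b) :
    (∃ t, ∀ x ∈ Ico c c', T^[k] x = x + t) ∧
      ∀ j, 1 ≤ j → j ≤ k → ∀ x ∈ Ico c c', T^[j] x ∉ Ico a b := by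
  induction k with
  | zero => exact ⟨⟨0, by simp⟩, fun j hj hj0 => by omega⟩
  | succ k ih =>
    obtain ⟨⟨t, htr⟩, hav⟩ := ih fun j hj hjk => hk j hj (by omega)
    obtain ⟨t', htr'⟩ := exists_iterate_succ_eq_add hT hsub hlt hcab hfree htr hav
    have hout : ∀ x ∈ Ico c c', T^[k + 1] x ∉ Ico a b :=
      (iterate_mem_or_notMem hlt hcab hfree (by omega) htr' fun j hj hjk => hav j hj (by omega)
        ).resolve_left fun hin => hk (k + 1) (by omega) le_rfl (hin c (left_mem_Ico.2 hlt))
    refine ⟨⟨t', htr'⟩, fun j hj hjk => ?_⟩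
    rcases hjk.lt_or_eq with hjk | rfl
    exacts [hav j hj (by omega), hout]

lemma exists_iterate_mem (hT : IsIET T) (hsub : Ico a b ⊆ Ico 0 1) (hlt : c < c')
    (hcab : Ico c c' ⊆ Ico a b) (hfree : Disjoint (cutSet T a b) (Ioo c c')) :
    ∃ n, 1 ≤ n ∧ T^[n] c ∈ Ico a b := by
  -- otherwise the images `T^[k] '' [c, c')` are disjoint intervals of equal length in `[0, 1)`
  by_contra! hnever
  have hall := fun k => exists_iterate_eq_add_and_notMem hT hsub hlt hcab hfree
    (k := k) fun j hj _ => hnever j hj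
  choose t ht using fun k => (hall k).1
  set J : ℕ → Set ℝ := fun k => T^[k] '' Ico c c'
  have hJ : ∀ k, J k = Ico (c + t k) (c' + t k) := fun k =>
    (image_congr (ht k)).trans (image_add_const_Ico _ _ _)
  have hJsub : ∀ k, J k ⊆ Ico 0 1 := fun k =>
    ((hT.bijOn.mapsTo.iterate k).mono_left (hcab.trans hsub)).image_subset
  have hdisj : ∀ i j, i < j → Disjoint (J i) (J j) := by
    rintro i j hij
    refine disjoint_left.2 ?_
    rintro _ ⟨x, hx, rfl⟩ ⟨y, hy, hxy⟩
    have := iterate_sub_eq_of_iterate_eq hT.bijOn.mapsTo hT.bijOn.injOn (hcab.trans hsub hx)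
      (hcab.trans hsub hy) hij.le hxy.symm
    exact (hall (j - i)).2 (j - i) (by omega) le_rfl y hy (this ▸ hcab hx)
  have hvol : ∀ k, volume.restrict (Ico (0 : ℝ) 1) (J k) = ENNReal.ofReal (c' - c) := fun k => by
    rw [Measure.restrict_apply (hJ k ▸ measurableSet_Ico), inter_eq_left.2 (hJsub k), hJ k,
      Real.volume_Ico, add_sub_add_right_eq_sub]
  have hmeasure :
      volume.restrict (Ico (0 : ℝ) 1) univ < ∑' k, volume.restrict (Ico (0 : ℝ) 1) (J k) := by
    simp only [hvol, Measure.restrict_apply_univ, Real.volume_Ico]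
    rw [ENNReal.tsum_const_eq_top_of_ne_zero (by simpa using hlt)]
    exact ENNReal.ofReal_lt_top
  obtain ⟨i, j, hij, z, hzi, hzj⟩ := exists_nonempty_inter_of_measure_univ_lt_tsum_measure _
    (fun k => (hJ k ▸ measurableSet_Ico).nullMeasurableSet) hmeasure
  rcases hij.lt_or_gt with h | h
  exacts [(hdisj i j h).notMem_of_mem_left hzi hzj, (hdisj j i h).notMem_of_mem_left hzj hzi]

lemma retMap_eq_add_of_disjoint_cutSet (hT : IsIET T) (hsub : Ico a b ⊆ Ico 0 1) (hlt : c < c')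
    (hcab : Ico c c' ⊆ Ico a b) (hfree : Disjoint (cutSet T a b) (Ioo c c')) :
    ∀ x ∈ Ico c c', (∃ n, 1 ≤ n ∧ T^[n] x ∈ Ico a b) ∧
      retMap T (Ico a b) x = x + (retMap T (Ico a b) c - c) := by
  have hcmem : c ∈ Ico c c' := left_mem_Ico.2 hlt
  set n := retTime T (Ico a b) c
  obtain ⟨hn, hcn⟩ : 1 ≤ n ∧ T^[n] c ∈ Ico a b :=
    Nat.sInf_mem (exists_iterate_mem hT hsub hlt hcab hfree)
  obtain ⟨⟨t, htr⟩, hav⟩ := exists_iterate_eq_add_and_notMem hT hsub hlt hcab hfree (k := n - 1)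
    fun j hj hjn => iterate_notMem_of_lt_retTime hj (by omega)
  obtain ⟨t', htr'⟩ := exists_iterate_succ_eq_add hT hsub hlt hcab hfree htr hav
  rw [Nat.sub_add_cancel hn] at htr'
  have hin := (iterate_mem_or_notMem hlt hcab hfree hn htr' fun j hj hjn => hav j hj (by omega)
    ).resolve_right fun hout => hout c hcmem hcn
  have hret : ∀ x ∈ Ico c c', retTime T (Ico a b) x = n := fun x hx =>
    retTime_eq hn (hin x hx) fun j hj hjn => hav j hj (by omega) x hx
  intro x hx
  refine ⟨⟨n, hn, hin x hx⟩, ?_⟩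
  rw [retMap, retMap, hret x hx, hret c hcmem, htr' x hx, htr' c hcmem, add_sub_cancel_left]

end InducedMap

/-- If `T` is a right-continuous IET of `[0,1)` with `N - 1` discontinuities (`N > 1`)
and `Δ = [a,b) ⊆ [0,1)`, then the induced first return map `T_Δ` is again a
right-continuous IET of `[a,b)`, with at most `N + 1` discontinuities. -/
theorem induced_map_is_IET (N : ℕ) (hN : 1 < N) (T : ℝ → ℝ) (hT : IsIET T)
    (hfin : (Discont T 0 1).Finite) (hcard : (Discont T 0 1).ncard = N - 1)
    (a b : ℝ) (hab : a < b) (hsub : Set.Ico a b ⊆ Set.Ico (0 : ℝ) 1) :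
    IsIETOn (retMap T (Set.Ico a b)) a b ∧
    (Discont (retMap T (Set.Ico a b)) a b).Finite ∧
    (Discont (retMap T (Set.Ico a b)) a b).ncard ≤ N + 1 := by
  have hC : (cutSet T a b).encard ≤ (N + 1 : ℕ) := by
    refine (encard_cutSet_le hT hsub).trans ?_
    rw [← hfin.cast_ncard_eq, hcard]
    norm_cast
    omega
  obtain ⟨n, p, hn, hp0, hpn, hp, hpC, hpfree⟩ :=
    exists_partition_of_finite hab (finite_of_encard_le_coe hC) cutSet_subset
  have hpiece : ∀ i < n, ∀ x ∈ Ico (p i) (p (i + 1)),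
      (∃ m, 1 ≤ m ∧ T^[m] x ∈ Ico a b) ∧
        retMap T (Ico a b) x = x + (retMap T (Ico a b) (p i) - p i) := fun i hi =>
    retMap_eq_add_of_disjoint_cutSet hT hsub (hp i hi) (hp0 ▸ hpn ▸ Ico_succ_subset_Ico hp hi)
      (hpfree i hi)
  have hret : ∀ x ∈ Ico a b, ∃ m, 1 ≤ m ∧ T^[m] x ∈ Ico a b := fun x hx => by
    obtain ⟨i, hi, hxi⟩ := exists_mem_Ico_succ (p := p) (hp0 ▸ hpn ▸ hx)
    exact (hpiece i hi x hxi).1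
  have hD : Discont (retMap T (Ico a b)) a b ⊆ cutSet T a b :=
    (discont_subset_image_of_piecewise hp0 hpn fun i hi x hx => (hpiece i hi x hx).2).trans
      hpC.image_subset
  refine ⟨isIETOn_of_injOn hn hp0 hpn hp (fun i hi x hx => (hpiece i hi x hx).2)
    (fun x hx => retMap_mem (hret x hx))
    (injOn_retMap hT.bijOn.mapsTo hT.bijOn.injOn hsub hret), ?_⟩
  exact encard_le_coe_iff_finite_ncard_le.1 ((encard_le_encard hD).trans hC)
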